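/- If (M, λ, α) is a first kind exact lcs structure (i.e. the vanishing distribution V_λ = ker dλ is 2-dimensional at every point), then ω(X_λ, X_α) = 1 everywhere, where X_λ, X_α are the ω-duals of λ and α. -/
import Mathlib


/-!
STATEMENT 7: If `(M, λ, α)` is a first kind exact lcs structure (the
vanishing distribution `V_λ = ker dλ` is 2-dimensional at every point), then
`ω(X_λ, X_α) = 1` everywhere, where `X_λ`, `X_α` are the `ω`-duals of `λ`
and `α`, and `ω = dλ - α ∧ λ` is the (non-degenerate) lcs form.

Forms are fields of (bi)linear maps on the model tangent space `E`; `d1` is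
an abstract exterior derivative on 1-forms; the wedge `α ∧ λ` is written out
pointwise, so `ω(v,w) = dλ(v,w) - (α(v) λ(w) - α(w) λ(v))`.
-/

theorem first_kind_lcs_omega_of_duals_eq_one
    {E : Type*} [AddCommGroup E] [Module ℝ E] [Module.Finite ℝ E]
    {M : Type*} [TopologicalSpace M]
    (d1 : (M → E →ₗ[ℝ] ℝ) → (M → E →ₗ[ℝ] E →ₗ[ℝ] ℝ))
    (lam α : M → E →ₗ[ℝ] ℝ)
    -- α is closed
    (hαclosed : ∀ p, d1 α p = 0)
    -- ω = dλ - α ∧ λ is non-degenerate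
    (hnondeg : ∀ p v,
      (∀ w, d1 lam p v w - (α p v * lam p w - α p w * lam p v) = 0) → v = 0)
    -- first kind: V_λ = ker dλ is everywhere 2-dimensional
    (hfirstkind : ∀ p, Module.finrank ℝ (LinearMap.ker (d1 lam p)) = 2)
    -- X_λ and X_α are the ω-duals of λ and α
    (Xlam Xalpha : M → E)
    (hXlam : ∀ p w, d1 lam p (Xlam p) w
      - (α p (Xlam p) * lam p w - α p w * lam p (Xlam p)) = lam p w)
    (hXalpha : ∀ p w, d1 lam p (Xalpha p) w
      - (α p (Xalpha p) * lam p w - α p w * lam p (Xalpha p)) = α p w) :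
    -- ω(X_λ, X_α) = 1 everywhere
    ∀ p, d1 lam p (Xlam p) (Xalpha p)
      - (α p (Xlam p) * lam p (Xalpha p) - α p (Xalpha p) * lam p (Xlam p)) = 1 := by
  intro p
  have key : lam p (Xalpha p) = 1 := by
    -- the map u ↦ (λ u, α u) on ker dλ
    let f : LinearMap.ker (d1 lam p) →ₗ[ℝ] ℝ × ℝ :=
      { toFun := fun u => (lam p u.1, α p u.1)
        map_add' := by intro u v; simp
        map_smul' := by intro c u; simp }
    have hinj : Function.Injective f := by
      rw [← LinearMap.ker_eq_bot, LinearMap.ker_eq_bot']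
      intro u hu
      have h1 : lam p u.1 = 0 := congrArg Prod.fst hu
      have h2 : α p u.1 = 0 := congrArg Prod.snd hu
      have hD : d1 lam p u.1 = 0 := u.2
      apply Subtype.ext
      apply hnondeg p
      intro w
      rw [hD]
      simp [h1, h2]
    have hrank : Module.finrank ℝ (LinearMap.ker (d1 lam p))
        = Module.finrank ℝ (ℝ × ℝ) := by
      rw [hfirstkind p]
      simp
    have hsurj : Function.Surjective f :=
      (LinearMap.injective_iff_surjective_of_finrank_eq_finrank hrank).mp hinj
    obtain ⟨u, hu⟩ := hsurj (1, 0)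
    have hu1 : lam p u.1 = 1 := congrArg Prod.fst hu
    have hu2 : α p u.1 = 0 := congrArg Prod.snd hu
    have huD : d1 lam p u.1 = 0 := u.2
    have hsub : Xalpha p - u.1 = 0 := by
      apply hnondeg p
      intro w
      have h := hXalpha p w
      simp only [map_sub, LinearMap.sub_apply, huD, LinearMap.zero_apply,
        hu1, hu2] at *
      nlinarith [h]
    have hXu : Xalpha p = u.1 := sub_eq_zero.mp hsub
    rw [hXu, hu1]
  calc d1 lam p (Xlam p) (Xalpha p)
      - (α p (Xlam p) * lam p (Xalpha p) - α p (Xalpha p) * lam p (Xlam p))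
      = lam p (Xalpha p) := hXlam p (Xalpha p)
    _ = 1 := key
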